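/- arXiv:1405.6829 — 3 statements merged into one kernel-verified Lean document; each statement's English description precedes it below -/
import Mathlib

section
/- Let 0<q₁<1 and 0<q₂<1, let β,δ>0, μ,ν>0 and η,ζ>−1 be real parameters, let f,g,h : [0,∞)→ℝ be continuous pairwise synchronous functions on [0,∞) with h nonnegative, and let u : [0,∞)→[0,∞) be continuous. Then for all t>0: I_{q₂}^{ζ,ν,δ}{u·f·g·h}(t)·I_{q₁}^{η,μ,β}{u}(t) + I_{q₂}^{ζ,ν,δ}{u·f·g}(t)·I_{q₁}^{η,μ,β}{u·h}(t) + I_{q₂}^{ζ,ν,δ}{u·h}(t)·I_{q₁}^{η,μ,β}{u·f·g}(t) + I_{q₂}^{ζ,ν,δ}{u}(t)·I_{q₁}^{η,μ,β}{u·f·g·h}(t) ≥ I_{q₂}^{ζ,ν,δ}{u·g·h}(t)·I_{q₁}^{η,μ,β}{u·f}(t) + I_{q₂}^{ζ,ν,δ}{u·f·h}(t)·I_{q₁}^{η,μ,β}{u·g}(t) + I_{q₂}^{ζ,ν,δ}{u·f}(t)·I_{q₁}^{η,μ,β}{u·g·h}(t) + I_{q₂}^{ζ,ν,δ}{u·g}(t)·I_{q₁}^{η,μ,β}{u·f·h}(t).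 -/
open scoped BigOperators

/-- The q-shifted factorial (a;q)_k = prod_{j<k} (1 - a q^j). -/
noncomputable def qPoch (q a : ℝ) (k : ℕ) : ℝ :=
  ∏ j ∈ Finset.range k, (1 - a * q ^ j)

/-- Generalized Erdélyi–Kober fractional q-integral
    I_q^{η,μ,β}{f}(t) = β(1-q^{1/β})(1-q)^{μ-1} ∑_k ((q^μ;q)_k/(q;q)_k) q^{k(η+1)} f(t q^{k/β}). -/
noncomputable def EK (q η μ β : ℝ) (f : ℝ → ℝ) (t : ℝ) : ℝ :=
  β * (1 - q ^ (1 / β)) * (1 - q) ^ (μ - 1) *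
    ∑' k : ℕ, qPoch q (q ^ μ) k / qPoch q q k * q ^ ((k : ℝ) * (η + 1)) * f (t * q ^ ((k : ℝ) / β))

def Synchronous (f g : ℝ → ℝ) : Prop :=
  ∀ x y : ℝ, 0 ≤ x → 0 ≤ y → 0 ≤ (f x - f y) * (g x - g y)

def Asynchronous (f g : ℝ → ℝ) : Prop :=
  ∀ x y : ℝ, 0 ≤ x → 0 ≤ y → (f x - f y) * (g x - g y) ≤ 0


/-! The difference of the two sides is the double integral, in `x` against the `q₂`-integral and
in `y` against the `q₁`-integral, of the kernel `u x * u y * (f x - f y) * (g x - g y) * (h x + h y)`,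
which is nonnegative because `f`, `g` are synchronous and `u`, `h` are nonnegative. Both integrals
are series with positive weights and nodes in `[0, t]`; continuity on `[0, t]` makes these series
absolutely convergent, so the product of two of them is a double series and the inequality can be
checked term by term. -/

open Filter Topology

section Series

variable {ι ι' α β : Type*}

lemma sum_tsum_mul (s : Finset ι) (φ : ι → α → ℝ) (c : ι → ℝ) (hφ : ∀ i ∈ s, Summable (φ i)) :
    ∑ i ∈ s, (∑' j, φ i j) * c i = ∑' j, ∑ i ∈ s, φ i j * c i := by
  simp_rw [← tsum_mul_right]
  exact (Summable.tsum_finsetSum fun i hi => (hφ i hi).mul_right _).symm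

lemma sum_mul_tsum (s : Finset ι) (c : ι → ℝ) (ψ : ι → β → ℝ) (hψ : ∀ i ∈ s, Summable (ψ i)) :
    ∑ i ∈ s, c i * ∑' k, ψ i k = ∑' k, ∑ i ∈ s, c i * ψ i k := by
  simp_rw [← tsum_mul_left]
  exact (Summable.tsum_finsetSum fun i hi => (hψ i hi).mul_left _).symm

lemma sum_tsum_mul_tsum_le (s : Finset ι) (s' : Finset ι') (φ : ι → α → ℝ) (ψ : ι → β → ℝ)
    (φ' : ι' → α → ℝ) (ψ' : ι' → β → ℝ)
    (hφ : ∀ i ∈ s, Summable (φ i)) (hψ : ∀ i ∈ s, Summable (ψ i))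
    (hφ' : ∀ i ∈ s', Summable (φ' i)) (hψ' : ∀ i ∈ s', Summable (ψ' i))
    (h : ∀ j k, ∑ i ∈ s, φ i j * ψ i k ≤ ∑ i ∈ s', φ' i j * ψ' i k) :
    ∑ i ∈ s, (∑' j, φ i j) * ∑' k, ψ i k ≤ ∑ i ∈ s', (∑' j, φ' i j) * ∑' k, ψ' i k := by
  rw [sum_tsum_mul s φ _ hφ, sum_tsum_mul s' φ' _ hφ']
  refine Summable.tsum_le_tsum (fun j => ?_) (summable_sum fun i hi => (hφ i hi).mul_right _)
    (summable_sum fun i hi => (hφ' i hi).mul_right _)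
  rw [sum_mul_tsum s _ ψ hψ, sum_mul_tsum s' _ ψ' hψ']
  exact Summable.tsum_le_tsum (h j) (summable_sum fun i hi => (hψ i hi).mul_left _)
    (summable_sum fun i hi => (hψ' i hi).mul_left _)

end Series

lemma qPoch_pos {q a : ℝ} (hq₀ : 0 < q) (hq₁ : q < 1) (ha₀ : 0 ≤ a) (ha₁ : a < 1) (k : ℕ) :
    0 < qPoch q a k :=
  Finset.prod_pos fun j _ => by
    have : a * q ^ j ≤ a := mul_le_of_le_one_right ha₀ (pow_le_one₀ hq₀.le hq₁.le)
    linarith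

lemma qPoch_succ (q a : ℝ) (k : ℕ) : qPoch q a (k + 1) = qPoch q a k * (1 - a * q ^ k) :=
  Finset.prod_range_succ _ k

noncomputable def ekConst (q μ β : ℝ) : ℝ :=
  β * (1 - q ^ (1 / β)) * (1 - q) ^ (μ - 1)

noncomputable def ekWeight (q η μ : ℝ) (k : ℕ) : ℝ :=
  qPoch q (q ^ μ) k / qPoch q q k * q ^ ((k : ℝ) * (η + 1))

lemma EK_eq (q η μ β : ℝ) (φ : ℝ → ℝ) (t : ℝ) :
    EK q η μ β φ t = ekConst q μ β * ∑' k : ℕ, ekWeight q η μ k * φ (t * q ^ ((k : ℝ) / β)) :=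
  rfl

section Weights

variable {q η μ β : ℝ}

lemma ekConst_nonneg (hq₀ : 0 < q) (hq₁ : q < 1) (hβ : 0 < β) : 0 ≤ ekConst q μ β := by
  have h₁ : q ^ (1 / β) ≤ 1 := Real.rpow_le_one hq₀.le hq₁.le (by positivity)
  have h₂ : 0 < (1 - q) ^ (μ - 1) := Real.rpow_pos_of_pos (by linarith) _
  exact mul_nonneg (mul_nonneg hβ.le (sub_nonneg.2 h₁)) h₂.le

lemma ekWeight_pos (hq₀ : 0 < q) (hq₁ : q < 1) (hμ : 0 < μ) (k : ℕ) : 0 < ekWeight q η μ k := by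
  have h₁ := qPoch_pos hq₀ hq₁ (Real.rpow_nonneg hq₀.le μ) (Real.rpow_lt_one hq₀.le hq₁ hμ) k
  have h₂ := qPoch_pos hq₀ hq₁ hq₀.le hq₁ k
  exact mul_pos (div_pos h₁ h₂) (Real.rpow_pos_of_pos hq₀ _)

lemma ekWeight_succ (hq₀ : 0 < q) (k : ℕ) :
    ekWeight q η μ (k + 1) =
      ekWeight q η μ k * ((1 - q ^ μ * q ^ k) / (1 - q * q ^ k) * q ^ (η + 1)) := by
  have hpow : q ^ (((k + 1 : ℕ) : ℝ) * (η + 1)) = q ^ ((k : ℝ) * (η + 1)) * q ^ (η + 1) := by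
    rw [← Real.rpow_add hq₀]; push_cast; ring_nf
  rw [ekWeight, ekWeight, qPoch_succ, qPoch_succ, hpow, mul_div_mul_comm]
  ring

lemma summable_ekWeight (hq₀ : 0 < q) (hq₁ : q < 1) (hμ : 0 < μ) (hη : -1 < η) :
    Summable (ekWeight q η μ) := by
  have hpow : Tendsto (fun k : ℕ => q ^ k) atTop (𝓝 0) :=
    tendsto_pow_atTop_nhds_zero_of_lt_one hq₀.le hq₁
  have hratio : Tendsto (fun k : ℕ => (1 - q ^ μ * q ^ k) / (1 - q * q ^ k) * q ^ (η + 1))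
      atTop (𝓝 ((1 - q ^ μ * 0) / (1 - q * 0) * q ^ (η + 1))) :=
    ((tendsto_const_nhds.sub (hpow.const_mul _)).div
      (tendsto_const_nhds.sub (hpow.const_mul _)) (by norm_num)).mul_const _
  simp only [mul_zero, sub_zero, div_one, one_mul] at hratio
  refine summable_of_ratio_test_tendsto_lt_one (Real.rpow_lt_one hq₀.le hq₁ (by linarith))
    (Eventually.of_forall fun k => (ekWeight_pos hq₀ hq₁ hμ k).ne') (hratio.congr fun k => ?_)
  have hw := ekWeight_pos (η := η) hq₀ hq₁ hμ k
  have hsucc := ekWeight_succ (η := η) (μ := μ) hq₀ k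
  have hr := pos_of_mul_pos_right (hsucc ▸ ekWeight_pos hq₀ hq₁ hμ (k + 1)) hw.le
  rw [hsucc, norm_mul, mul_div_cancel_left₀ _ (norm_ne_zero_iff.2 hw.ne'), Real.norm_of_nonneg hr.le]

lemma mul_rpow_mem_Icc (hq₀ : 0 < q) (hq₁ : q < 1) (hβ : 0 < β) {t : ℝ} (ht : 0 ≤ t) (k : ℕ) :
    t * q ^ ((k : ℝ) / β) ∈ Set.Icc 0 t :=
  ⟨by positivity, mul_le_of_le_one_right ht (Real.rpow_le_one hq₀.le hq₁.le (by positivity))⟩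

lemma summable_ekWeight_mul (hq₀ : 0 < q) (hq₁ : q < 1) (hμ : 0 < μ) (hη : -1 < η) (hβ : 0 < β)
    {t : ℝ} (ht : 0 ≤ t) {φ : ℝ → ℝ} (hφ : ContinuousOn φ (Set.Icc 0 t)) :
    Summable fun k : ℕ => ekWeight q η μ k * φ (t * q ^ ((k : ℝ) / β)) := by
  obtain ⟨M, hM⟩ := isCompact_Icc.exists_bound_of_continuousOn hφ
  refine .of_norm_bounded ((summable_ekWeight hq₀ hq₁ hμ hη).mul_right M) fun k => ?_
  have hw := ekWeight_pos (η := η) hq₀ hq₁ hμ k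
  rw [norm_mul, Real.norm_of_nonneg hw.le]
  exact mul_le_mul_of_nonneg_left (hM _ (mul_rpow_mem_Icc hq₀ hq₁ hβ ht k)) hw.le

end Weights

lemma sum_EK_mul_EK_le {ι ι' : Type*} {q₁ q₂ β δ μ ν η ζ t : ℝ}
    (hq₁ : 0 < q₁) (hq₁' : q₁ < 1) (hq₂ : 0 < q₂) (hq₂' : q₂ < 1)
    (hβ : 0 < β) (hδ : 0 < δ) (hμ : 0 < μ) (hν : 0 < ν) (hη : -1 < η) (hζ : -1 < ζ) (ht : 0 ≤ t)
    (s : Finset ι) (s' : Finset ι') (Φ Ψ : ι → ℝ → ℝ) (Φ' Ψ' : ι' → ℝ → ℝ)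
    (hΦ : ∀ i ∈ s, ContinuousOn (Φ i) (Set.Icc 0 t)) (hΨ : ∀ i ∈ s, ContinuousOn (Ψ i) (Set.Icc 0 t))
    (hΦ' : ∀ i ∈ s', ContinuousOn (Φ' i) (Set.Icc 0 t))
    (hΨ' : ∀ i ∈ s', ContinuousOn (Ψ' i) (Set.Icc 0 t))
    (h : ∀ x ∈ Set.Icc 0 t, ∀ y ∈ Set.Icc 0 t,
      ∑ i ∈ s, Φ i x * Ψ i y ≤ ∑ i ∈ s', Φ' i x * Ψ' i y) :
    ∑ i ∈ s, EK q₂ ζ ν δ (Φ i) t * EK q₁ η μ β (Ψ i) t ≤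
      ∑ i ∈ s', EK q₂ ζ ν δ (Φ' i) t * EK q₁ η μ β (Ψ' i) t := by
  simp_rw [EK_eq, mul_mul_mul_comm (ekConst q₂ ν δ), ← Finset.mul_sum]
  refine mul_le_mul_of_nonneg_left ?_
    (mul_nonneg (ekConst_nonneg hq₂ hq₂' hδ) (ekConst_nonneg hq₁ hq₁' hβ))
  refine sum_tsum_mul_tsum_le s s' _ _ _ _
    (fun i hi => summable_ekWeight_mul hq₂ hq₂' hν hζ hδ ht (hΦ i hi))
    (fun i hi => summable_ekWeight_mul hq₁ hq₁' hμ hη hβ ht (hΨ i hi))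
    (fun i hi => summable_ekWeight_mul hq₂ hq₂' hν hζ hδ ht (hΦ' i hi))
    (fun i hi => summable_ekWeight_mul hq₁ hq₁' hμ hη hβ ht (hΨ' i hi)) fun j k => ?_
  simp_rw [mul_mul_mul_comm (ekWeight q₂ ζ ν j), ← Finset.mul_sum]
  exact mul_le_mul_of_nonneg_left
    (h _ (mul_rpow_mem_Icc hq₂ hq₂' hδ ht j) _ (mul_rpow_mem_Icc hq₁ hq₁' hβ ht k))
    (mul_nonneg (ekWeight_pos hq₂ hq₂' hν j).le (ekWeight_pos hq₁ hq₁' hμ k).le)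

lemma Synchronous.kernel_le {f g h u : ℝ → ℝ} (hfg : Synchronous f g)
    (hh0 : ∀ x : ℝ, 0 ≤ x → 0 ≤ h x) (hu0 : ∀ x : ℝ, 0 ≤ x → 0 ≤ u x) {x y : ℝ}
    (hx : 0 ≤ x) (hy : 0 ≤ y) :
    u x * g x * h x * (u y * f y) + u x * f x * h x * (u y * g y) +
        u x * f x * (u y * g y * h y) + u x * g x * (u y * f y * h y) ≤
      u x * f x * g x * h x * u y + u x * f x * g x * (u y * h y) +
        u x * h x * (u y * f y * g y) + u x * (u y * f y * g y * h y) := by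
  have hkernel : 0 ≤ u x * u y * ((f x - f y) * (g x - g y)) * (h x + h y) :=
    mul_nonneg (mul_nonneg (mul_nonneg (hu0 x hx) (hu0 y hy)) (hfg x y hx hy))
      (add_nonneg (hh0 x hx) (hh0 y hy))
  linear_combination hkernel

theorem thm0_general
    (q₁ q₂ β δ μ ν η ζ : ℝ)
    (hq₁ : 0 < q₁) (hq₁' : q₁ < 1) (hq₂ : 0 < q₂) (hq₂' : q₂ < 1)
    (hβ : 0 < β) (hδ : 0 < δ) (hμ : 0 < μ) (hν : 0 < ν)
    (hη : -1 < η) (hζ : -1 < ζ)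
    (f g h u : ℝ → ℝ)
    (hcf : ContinuousOn f (Set.Ici 0))
    (hcg : ContinuousOn g (Set.Ici 0))
    (hch : ContinuousOn h (Set.Ici 0))
    (hcu : ContinuousOn u (Set.Ici 0))
    (hfg : Synchronous f g)
    (hh0 : ∀ x : ℝ, 0 ≤ x → 0 ≤ h x)
    (hu0 : ∀ x : ℝ, 0 ≤ x → 0 ≤ u x)
    (t : ℝ) (ht : 0 < t) :
    EK q₂ ζ ν δ (fun s => u s * f s * g s * h s) t * EK q₁ η μ β u t +
      EK q₂ ζ ν δ (fun s => u s * f s * g s) t * EK q₁ η μ β (fun s => u s * h s) t +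
      EK q₂ ζ ν δ (fun s => u s * h s) t * EK q₁ η μ β (fun s => u s * f s * g s) t +
      EK q₂ ζ ν δ u t * EK q₁ η μ β (fun s => u s * f s * g s * h s) t
      ≥
      EK q₂ ζ ν δ (fun s => u s * g s * h s) t * EK q₁ η μ β (fun s => u s * f s) t +
      EK q₂ ζ ν δ (fun s => u s * f s * h s) t * EK q₁ η μ β (fun s => u s * g s) t +
      EK q₂ ζ ν δ (fun s => u s * f s) t * EK q₁ η μ β (fun s => u s * g s * h s) t +
      EK q₂ ζ ν δ (fun s => u s * g s) t * EK q₁ η μ β (fun s => u s * f s * h s) t := by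
  have hsub : Set.Icc 0 t ⊆ Set.Ici 0 := Set.Icc_subset_Ici_self
  have cf := hcf.mono hsub
  have cg := hcg.mono hsub
  have ch := hch.mono hsub
  have cu := hcu.mono hsub
  have key := sum_EK_mul_EK_le hq₁ hq₁' hq₂ hq₂' hβ hδ hμ hν hη hζ ht.le Finset.univ Finset.univ
    ![fun s => u s * g s * h s, fun s => u s * f s * h s, fun s => u s * f s, fun s => u s * g s]
    ![fun s => u s * f s, fun s => u s * g s, fun s => u s * g s * h s, fun s => u s * f s * h s]
    ![fun s => u s * f s * g s * h s, fun s => u s * f s * g s, fun s => u s * h s, u]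
    ![u, fun s => u s * h s, fun s => u s * f s * g s, fun s => u s * f s * g s * h s]
    ?_ ?_ ?_ ?_ fun x hx y hy => by simpa [Fin.sum_univ_four] using hfg.kernel_le hh0 hu0 hx.1 hy.1
  · simpa [Fin.sum_univ_four] using key
  all_goals intro i _; fin_cases i <;> simp only [Fin.zero_eta, Fin.mk_one, Fin.reduceFinMk, Matrix.cons_val_zero, Matrix.cons_val_one, Matrix.cons_val] <;> fun_prop

theorem thm0
    (q₁ q₂ β δ μ ν η ζ : ℝ)
    (hq₁ : 0 < q₁) (hq₁' : q₁ < 1) (hq₂ : 0 < q₂) (hq₂' : q₂ < 1)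
    (hβ : 0 < β) (hδ : 0 < δ) (hμ : 0 < μ) (hν : 0 < ν)
    (hη : -1 < η) (hζ : -1 < ζ)
    (f g h u : ℝ → ℝ)
    (hcf : ContinuousOn f (Set.Ici 0))
    (hcg : ContinuousOn g (Set.Ici 0))
    (hch : ContinuousOn h (Set.Ici 0))
    (hcu : ContinuousOn u (Set.Ici 0))
    (hfg : Synchronous f g) (hfh : Synchronous f h) (hgh : Synchronous g h)
    (hh0 : ∀ x : ℝ, 0 ≤ x → 0 ≤ h x)
    (hu0 : ∀ x : ℝ, 0 ≤ x → 0 ≤ u x)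
    (t : ℝ) (ht : 0 < t) :
    EK q₂ ζ ν δ (fun s => u s * f s * g s * h s) t * EK q₁ η μ β u t +
      EK q₂ ζ ν δ (fun s => u s * f s * g s) t * EK q₁ η μ β (fun s => u s * h s) t +
      EK q₂ ζ ν δ (fun s => u s * h s) t * EK q₁ η μ β (fun s => u s * f s * g s) t +
      EK q₂ ζ ν δ u t * EK q₁ η μ β (fun s => u s * f s * g s * h s) t
      ≥
      EK q₂ ζ ν δ (fun s => u s * g s * h s) t * EK q₁ η μ β (fun s => u s * f s) t +
      EK q₂ ζ ν δ (fun s => u s * f s * h s) t * EK q₁ η μ β (fun s => u s * g s) t +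
      EK q₂ ζ ν δ (fun s => u s * f s) t * EK q₁ η μ β (fun s => u s * g s * h s) t +
      EK q₂ ζ ν δ (fun s => u s * g s) t * EK q₁ η μ β (fun s => u s * f s * h s) t :=
  thm0_general q₁ q₂ β δ μ ν η ζ hq₁ hq₁' hq₂ hq₂' hβ hδ hμ hν hη hζ f g h u hcf hcg hch hcu hfg hh0
    hu0 t ht
end

section
/- Let 0<q₁<1 and 0<q₂<1, let β,δ>0, μ,ν>0 and η,ζ>−1 be real parameters, let f,g,h : [0,∞)→ℝ be continuous pairwise synchronous functions on [0,∞) with h nonnegative, and let u,v : [0,∞)→[0,∞) be continuous. Then for all t>0: I_{q₂}^{ζ,ν,δ}{v·f·g·h}(t)·I_{q₁}^{η,μ,β}{u}(t) + I_{q₂}^{ζ,ν,δ}{v·f·g}(t)·I_{q₁}^{η,μ,β}{u·h}(t) + I_{q₂}^{ζ,ν,δ}{v·h}(t)·I_{q₁}^{η,μ,β}{u·f·g}(t) + I_{q₂}^{ζ,ν,δ}{v}(t)·I_{q₁}^{η,μ,β}{u·f·g·h}(t) ≥ I_{q₂}^{ζ,ν,δ}{v·g·h}(t)·I_{q₁}^{η,μ,β}{u·f}(t)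 + I_{q₂}^{ζ,ν,δ}{v·f·h}(t)·I_{q₁}^{η,μ,β}{u·g}(t) + I_{q₂}^{ζ,ν,δ}{v·f}(t)·I_{q₁}^{η,μ,β}{u·g·h}(t) + I_{q₂}^{ζ,ν,δ}{v·g}(t)·I_{q₁}^{η,μ,β}{u·f·h}(t). -/
open scoped BigOperators

/-!
For `x, y ≥ 0` the number `u x * v y * (f x - f y) * (g x - g y) * (h x + h y)` is nonnegative.
Integrating it in `x` against one positive linear functional and then in `y` against another,
and expanding the product, gives the difference of the two sides. On `[0, t]` each
Erdélyi–Kober q-integral is such a functional: a series `∑ w k * φ (t * q ^ (k / β))` whose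
nonnegative weights are summable by the ratio test, the ratio tending to `q ^ (η + 1) < 1`.
-/

open Set Filter

theorem PositiveLinearMap.chebyshev_three {X : Type*} [TopologicalSpace X]
    (A B : C(X, ℝ) →ₚ[ℝ] ℝ) (F G H U V : C(X, ℝ))
    (hFG : ∀ x y, 0 ≤ (F x - F y) * (G x - G y)) (hH : 0 ≤ H) (hU : 0 ≤ U) (hV : 0 ≤ V) :
    B (V * G * H) * A (U * F) + B (V * F * H) * A (U * G) + B (V * F) * A (U * G * H) +
        B (V * G) * A (U * F * H) ≤
      B (V * F * G * H) * A U + B (V * F * G) * A (U * H) + B (V * H) * A (U * F * G) +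
        B V * A (U * F * G * H) := by
  set Ψ : C(X, ℝ) := A (U * F * G * H) • 1 + A (U * F * G) • H - A (U * F * H) • G
      - A (U * F) • (G * H) - A (U * G * H) • F - A (U * G) • (F * H) + A (U * H) • (F * G)
      + A U • (F * G * H) with hΨ_def
  have hΨ : ∀ y, Ψ y =
      A (U * ((F - .const X (F y)) * (G - .const X (G y))) * (H + .const X (H y))) := by
    intro y
    have hexp : U * ((F - .const X (F y)) * (G - .const X (G y))) * (H + .const X (H y)) =
        U * F * G * H + H y • (U * F * G) - G y • (U * F * H) - (G y * H y) • (U * F)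
          - F y • (U * G * H) - (F y * H y) • (U * G) + (F y * G y) • (U * H)
          + (F y * G y * H y) • U := by
      ext x
      simp only [ContinuousMap.mul_apply, ContinuousMap.add_apply, ContinuousMap.sub_apply,
        ContinuousMap.smul_apply, ContinuousMap.const_apply, smul_eq_mul]
      ring
    rw [hexp]
    simp only [hΨ_def, map_add, map_sub, map_smul, smul_eq_mul, ContinuousMap.add_apply,
      ContinuousMap.sub_apply, ContinuousMap.smul_apply, ContinuousMap.mul_apply,
      ContinuousMap.one_apply]
    ring
  have hΨ_nonneg : 0 ≤ Ψ := ContinuousMap.le_def.mpr fun y => by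
    rw [ContinuousMap.zero_apply, hΨ]
    refine A.map_nonneg (ContinuousMap.le_def.mpr fun x => ?_)
    exact mul_nonneg (mul_nonneg (hU x) (hFG x y)) (add_nonneg (hH x) (hH y))
  have hexp : V * Ψ = A (U * F * G * H) • V + A (U * F * G) • (V * H) - A (U * F * H) • (V * G)
      - A (U * F) • (V * G * H) - A (U * G * H) • (V * F) - A (U * G) • (V * F * H)
      + A (U * H) • (V * F * G) + A U • (V * F * G * H) := by
    ext x
    simp only [hΨ_def, ContinuousMap.mul_apply, ContinuousMap.add_apply, ContinuousMap.sub_apply,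
      ContinuousMap.smul_apply, ContinuousMap.one_apply, smul_eq_mul]
    ring
  have key := B.map_nonneg (mul_nonneg hV hΨ_nonneg)
  rw [hexp] at key
  simp only [map_add, map_sub, map_smul, smul_eq_mul] at key
  linarith

section WeightedSum

variable {X : Type*} [TopologicalSpace X] [CompactSpace X]

theorem ContinuousMap.summable_mul_comp {w : ℕ → ℝ} (hw : Summable w) (x : ℕ → X)
    (φ : C(X, ℝ)) : Summable fun k => w k * φ (x k) :=
  Summable.of_norm_bounded (hw.abs.mul_right ‖φ‖) fun k => by
    rw [norm_mul, Real.norm_eq_abs]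
    exact mul_le_mul_of_nonneg_left (φ.norm_coe_le_norm _) (abs_nonneg _)

noncomputable def weightedSum (w : ℕ → ℝ) (hw : Summable w) (hw0 : ∀ k, 0 ≤ w k) (x : ℕ → X) :
    C(X, ℝ) →ₚ[ℝ] ℝ :=
  PositiveLinearMap.mk₀
    { toFun φ := ∑' k, w k * φ (x k)
      map_add' φ ψ := by
        simp only [ContinuousMap.add_apply, mul_add]
        exact (ContinuousMap.summable_mul_comp hw x φ).tsum_add
          (ContinuousMap.summable_mul_comp hw x ψ)
      map_smul' c φ := by
        simp only [ContinuousMap.smul_apply, smul_eq_mul, RingHom.id_apply, ← tsum_mul_left]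
        congr 1; ext k; ring }
    fun φ hφ => tsum_nonneg fun k => mul_nonneg (hw0 k) (hφ (x k))

theorem weightedSum_apply (w : ℕ → ℝ) (hw : Summable w) (hw0 : ∀ k, 0 ≤ w k) (x : ℕ → X)
    (φ : C(X, ℝ)) : weightedSum w hw hw0 x φ = ∑' k, w k * φ (x k) := rfl

end WeightedSum

theorem qPoch_pos_s1 {q a : ℝ} (hq0 : 0 ≤ q) (hq1 : q ≤ 1) (ha0 : 0 ≤ a) (ha1 : a < 1) (k : ℕ) :
    0 < qPoch q a k :=
  Finset.prod_pos fun j _ => by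
    have : a * q ^ j ≤ a := mul_le_of_le_one_right ha0 (pow_le_one₀ hq0 hq1)
    linarith

section EK

variable {q η μ β t : ℝ}

noncomputable def ekCoeff (q η μ : ℝ) (k : ℕ) : ℝ :=
  qPoch q (q ^ μ) k / qPoch q q k * q ^ ((k : ℝ) * (η + 1))

theorem ekCoeff_pos (hq : 0 < q) (hq1 : q < 1) (hμ : 0 < μ) (k : ℕ) : 0 < ekCoeff q η μ k :=
  mul_pos (div_pos (qPoch_pos_s1 hq.le hq1.le (by positivity) (Real.rpow_lt_one hq.le hq1 hμ) k)
    (qPoch_pos_s1 hq.le hq1.le hq.le hq1 k)) (Real.rpow_pos_of_pos hq _)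

theorem ekCoeff_succ (hq : 0 < q) (hq1 : q < 1) (k : ℕ) :
    ekCoeff q η μ (k + 1) =
      ekCoeff q η μ k * ((1 - q ^ μ * q ^ k) / (1 - q * q ^ k) * q ^ (η + 1)) := by
  have hQ := qPoch_pos_s1 hq.le hq1.le hq.le hq1 k
  have hd : 1 - q * q ^ k ≠ 0 := by
    have : q * q ^ k < 1 := by
      rw [← pow_succ']
      exact pow_lt_one₀ hq.le hq1 (Nat.succ_ne_zero k)
    linarith
  simp only [ekCoeff, qPoch, Finset.prod_range_succ] at hQ ⊢
  rw [Nat.cast_succ, add_one_mul, Real.rpow_add hq]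
  field_simp

theorem summable_ekCoeff (hq : 0 < q) (hq1 : q < 1) (hμ : 0 < μ) (hη : -1 < η) :
    Summable (ekCoeff q η μ) := by
  have hpos := ekCoeff_pos (η := η) hq hq1 hμ
  refine summable_of_ratio_test_tendsto_lt_one
    (Real.rpow_lt_one hq.le hq1 (by linarith : 0 < η + 1))
    (Eventually.of_forall fun k => (hpos k).ne') ?_
  have hpow := tendsto_pow_atTop_nhds_zero_of_lt_one hq.le hq1
  have hlim := ((tendsto_const_nhds (x := (1 : ℝ))).sub (hpow.const_mul (q ^ μ))).div
    ((tendsto_const_nhds (x := (1 : ℝ))).sub (hpow.const_mul q)) (by simp)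
    |>.mul_const (q ^ (η + 1))
  simp only [mul_zero, sub_zero, div_one, one_mul] at hlim
  refine hlim.congr fun k => ?_
  rw [Real.norm_of_nonneg (hpos _).le, Real.norm_of_nonneg (hpos _).le, ekCoeff_succ hq hq1,
    mul_div_cancel_left₀ _ (hpos k).ne', Pi.div_apply]

theorem EK_prefactor_nonneg (hq : 0 ≤ q) (hq1 : q ≤ 1) (hβ : 0 ≤ β) :
    0 ≤ β * (1 - q ^ (1 / β)) * (1 - q) ^ (μ - 1) :=
  mul_nonneg (mul_nonneg hβ (sub_nonneg.mpr (Real.rpow_le_one hq hq1 (by positivity))))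
    (Real.rpow_nonneg (sub_nonneg.mpr hq1) _)

noncomputable def ekFunctional (hq : 0 < q) (hq1 : q < 1) (hμ : 0 < μ) (hη : -1 < η)
    (hβ : 0 ≤ β) (ht : 0 ≤ t) : C(Icc (0 : ℝ) t, ℝ) →ₚ[ℝ] ℝ :=
  weightedSum (fun k => β * (1 - q ^ (1 / β)) * (1 - q) ^ (μ - 1) * ekCoeff q η μ k)
    ((summable_ekCoeff hq hq1 hμ hη).mul_left _)
    (fun k => mul_nonneg (EK_prefactor_nonneg hq.le hq1.le hβ) (ekCoeff_pos hq hq1 hμ k).le)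
    fun k => ⟨t * q ^ ((k : ℝ) / β), mul_nonneg ht (by positivity),
      mul_le_of_le_one_right ht (Real.rpow_le_one hq.le hq1.le (by positivity))⟩

theorem EK_eq_ekFunctional (hq : 0 < q) (hq1 : q < 1) (hμ : 0 < μ) (hη : -1 < η) (hβ : 0 ≤ β)
    (ht : 0 ≤ t) (Φ : C(Icc (0 : ℝ) t, ℝ)) {φ : ℝ → ℝ} (hΦ : ∀ s, Φ s = φ s) :
    EK q η μ β φ t = ekFunctional hq hq1 hμ hη hβ ht Φ := by
  rw [ekFunctional, weightedSum_apply, EK, ← tsum_mul_left]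
  congr 1; ext k
  rw [hΦ, ekCoeff]
  ring

end EK

theorem thm1_general
    (q₁ q₂ β δ μ ν η ζ : ℝ)
    (hq₁ : 0 < q₁) (hq₁' : q₁ < 1) (hq₂ : 0 < q₂) (hq₂' : q₂ < 1)
    (hβ : 0 < β) (hδ : 0 < δ) (hμ : 0 < μ) (hν : 0 < ν)
    (hη : -1 < η) (hζ : -1 < ζ)
    (f g h u v : ℝ → ℝ)
    (hcf : ContinuousOn f (Set.Ici 0))
    (hcg : ContinuousOn g (Set.Ici 0))
    (hch : ContinuousOn h (Set.Ici 0))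
    (hcu : ContinuousOn u (Set.Ici 0))
    (hcv : ContinuousOn v (Set.Ici 0))
    (hfg : Synchronous f g)
    (hh0 : ∀ x : ℝ, 0 ≤ x → 0 ≤ h x)
    (hu0 : ∀ x : ℝ, 0 ≤ x → 0 ≤ u x)
    (hv0 : ∀ x : ℝ, 0 ≤ x → 0 ≤ v x)
    (t : ℝ) (ht : 0 < t) :
    EK q₂ ζ ν δ (fun s => v s * f s * g s * h s) t * EK q₁ η μ β u t +
      EK q₂ ζ ν δ (fun s => v s * f s * g s) t * EK q₁ η μ β (fun s => u s * h s) t +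
      EK q₂ ζ ν δ (fun s => v s * h s) t * EK q₁ η μ β (fun s => u s * f s * g s) t +
      EK q₂ ζ ν δ v t * EK q₁ η μ β (fun s => u s * f s * g s * h s) t
      ≥
      EK q₂ ζ ν δ (fun s => v s * g s * h s) t * EK q₁ η μ β (fun s => u s * f s) t +
      EK q₂ ζ ν δ (fun s => v s * f s * h s) t * EK q₁ η μ β (fun s => u s * g s) t +
      EK q₂ ζ ν δ (fun s => v s * f s) t * EK q₁ η μ β (fun s => u s * g s * h s) t +
      EK q₂ ζ ν δ (fun s => v s * g s) t * EK q₁ η μ β (fun s => u s * f s * h s) t := by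
  let restrict (φ : ℝ → ℝ) (hφ : ContinuousOn φ (Ici 0)) : C(Icc (0 : ℝ) t, ℝ) :=
    ⟨fun s => φ s, (hφ.mono Icc_subset_Ici_self).domRestrict⟩
  have key := PositiveLinearMap.chebyshev_three
    (ekFunctional hq₁ hq₁' hμ hη hβ.le ht.le) (ekFunctional hq₂ hq₂' hν hζ hδ.le ht.le)
    (restrict f hcf) (restrict g hcg) (restrict h hch) (restrict u hcu) (restrict v hcv)
    (fun x y => hfg x y x.2.1 y.2.1) (ContinuousMap.le_def.mpr fun x => hh0 x x.2.1)
    (ContinuousMap.le_def.mpr fun x => hu0 x x.2.1)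
    (ContinuousMap.le_def.mpr fun x => hv0 x x.2.1)
  convert key using 6 <;> refine EK_eq_ekFunctional _ _ _ _ _ _ _ fun s => ?_ <;> rfl

theorem thm1
    (q₁ q₂ β δ μ ν η ζ : ℝ)
    (hq₁ : 0 < q₁) (hq₁' : q₁ < 1) (hq₂ : 0 < q₂) (hq₂' : q₂ < 1)
    (hβ : 0 < β) (hδ : 0 < δ) (hμ : 0 < μ) (hν : 0 < ν)
    (hη : -1 < η) (hζ : -1 < ζ)
    (f g h u v : ℝ → ℝ)
    (hcf : ContinuousOn f (Set.Ici 0))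
    (hcg : ContinuousOn g (Set.Ici 0))
    (hch : ContinuousOn h (Set.Ici 0))
    (hcu : ContinuousOn u (Set.Ici 0))
    (hcv : ContinuousOn v (Set.Ici 0))
    (hfg : Synchronous f g) (hfh : Synchronous f h) (hgh : Synchronous g h)
    (hh0 : ∀ x : ℝ, 0 ≤ x → 0 ≤ h x)
    (hu0 : ∀ x : ℝ, 0 ≤ x → 0 ≤ u x)
    (hv0 : ∀ x : ℝ, 0 ≤ x → 0 ≤ v x)
    (t : ℝ) (ht : 0 < t) :
    EK q₂ ζ ν δ (fun s => v s * f s * g s * h s) t * EK q₁ η μ β u t +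
      EK q₂ ζ ν δ (fun s => v s * f s * g s) t * EK q₁ η μ β (fun s => u s * h s) t +
      EK q₂ ζ ν δ (fun s => v s * h s) t * EK q₁ η μ β (fun s => u s * f s * g s) t +
      EK q₂ ζ ν δ v t * EK q₁ η μ β (fun s => u s * f s * g s * h s) t
      ≥
      EK q₂ ζ ν δ (fun s => v s * g s * h s) t * EK q₁ η μ β (fun s => u s * f s) t +
      EK q₂ ζ ν δ (fun s => v s * f s * h s) t * EK q₁ η μ β (fun s => u s * g s) t +
      EK q₂ ζ ν δ (fun s => v s * f s) t * EK q₁ η μ β (fun s => u s * g s * h s) t +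
      EK q₂ ζ ν δ (fun s => v s * g s) t * EK q₁ η μ β (fun s => u s * f s * h s) t :=
  thm1_general q₁ q₂ β δ μ ν η ζ hq₁ hq₁' hq₂ hq₂' hβ hδ hμ hν hη hζ f g h u v hcf hcg hch hcu hcv
    hfg hh0 hu0 hv0 t ht
end

section
/- Let 0<q₁<1 and 0<q₂<1, let β,δ>0, μ,ν>0 and η,ζ>−1 be real parameters, let u,v : [0,∞)→[0,∞) be continuous, and let f,g,h : [0,∞)→ℝ be continuous pairwise synchronous functions satisfying ψ ≤ f(x) ≤ Ψ, φ ≤ g(x) ≤ Φ and ω ≤ h(x) ≤ Ω for all x ∈ [0,∞), where ψ,Ψ,φ,Φ,ω,Ω are real constants. Then for all t>0: | I_{q₁}^{η,μ,β}{u·f·g·h}(t)·I_{q₂}^{ζ,ν,δ}{v}(t) + I_{q₁}^{η,μ,β}{u·h}(t)·I_{q₂}^{ζ,ν,δ}{v·f·g}(t) + I_{q₁}^{η,μ,β}{u·g}(t)·I_{q₂}^{ζ,ν,δ}{v·f·h}(t) + I_{q₁}^{η,μ,β}{u·f}(t)·I_{q₂}^{ζ,ν,δ}{v·g·h}(t)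 − I_{q₁}^{η,μ,β}{u·g·h}(t)·I_{q₂}^{ζ,ν,δ}{v·f}(t) − I_{q₁}^{η,μ,β}{u·f·h}(t)·I_{q₂}^{ζ,ν,δ}{v·g}(t) − I_{q₁}^{η,μ,β}{u·f·g}(t)·I_{q₂}^{ζ,ν,δ}{v·h}(t) − I_{q₁}^{η,μ,β}{u}(t)·I_{q₂}^{ζ,ν,δ}{v·f·g·h}(t) | ≤ I_{q₁}^{η,μ,β}{u}(t)·I_{q₂}^{ζ,ν,δ}{v}(t)·(Ψ−ψ)(Φ−φ)(Ω−ω). -/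
open scoped BigOperators

namespace EKAux


noncomputable def coef (q η μ : ℝ) (k : ℕ) : ℝ :=
  qPoch q (q ^ μ) k / qPoch q q k * q ^ ((k : ℝ) * (η + 1))

noncomputable def pt (q β t : ℝ) (k : ℕ) : ℝ := t * q ^ ((k : ℝ) / β)

variable {q η μ β t : ℝ}

lemma qPoch_pos (hq : 0 < q) (hq' : q < 1) {a : ℝ} (ha : 0 ≤ a) (ha' : a < 1) (k : ℕ) :
    0 < qPoch q a k := by
  refine Finset.prod_pos fun j _ => ?_
  have h0 : (0:ℝ) ≤ q ^ j := by positivity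
  have h1 : q ^ j ≤ 1 := pow_le_one₀ hq.le hq'.le
  nlinarith

lemma coef_pos (hq : 0 < q) (hq' : q < 1) (hμ : 0 < μ) (k : ℕ) :
    0 < coef q η μ k := by
  have ha : (0:ℝ) < q ^ μ := Real.rpow_pos_of_pos hq _
  have ha' : q ^ μ < 1 := Real.rpow_lt_one hq.le hq' hμ
  exact mul_pos (div_pos (qPoch_pos hq hq' ha.le ha' k) (qPoch_pos hq hq' hq.le hq' k))
    (Real.rpow_pos_of_pos hq _)

lemma coef_succ (hq : 0 < q) (k : ℕ) :
    coef q η μ (k + 1)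
      = coef q η μ k * ((1 - q ^ μ * q ^ k) / (1 - q * q ^ k) * q ^ (η + 1)) := by
  unfold coef qPoch
  rw [Finset.prod_range_succ, Finset.prod_range_succ]
  have h1 : ((k : ℕ) + 1 : ℝ) * (η + 1) = (k : ℝ) * (η + 1) + (η + 1) := by ring
  push_cast
  rw [h1, Real.rpow_add hq, mul_div_mul_comm]
  ring

lemma pt_mem (hq : 0 < q) (hq' : q < 1) (hβ : 0 < β) (ht : 0 ≤ t) (k : ℕ) :
    pt q β t k ∈ Set.Icc 0 t := by
  have h0 : (0:ℝ) < q ^ ((k : ℝ) / β) := Real.rpow_pos_of_pos hq _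
  have h1 : q ^ ((k : ℝ) / β) ≤ 1 :=
    Real.rpow_le_one hq.le hq'.le (div_nonneg (Nat.cast_nonneg k) hβ.le)
  constructor
  · exact mul_nonneg ht h0.le
  · calc t * q ^ ((k : ℝ) / β) ≤ t * 1 := by nlinarith
      _ = t := mul_one t

lemma summable_coef (hq : 0 < q) (hq' : q < 1) (hμ : 0 < μ) (hη : -1 < η) :
    Summable (coef q η μ) := by
  set r : ℝ := (1 + q ^ (η + 1)) / 2 with hr
  have hqe : (0:ℝ) < q ^ (η + 1) := Real.rpow_pos_of_pos hq _
  have hqe1 : q ^ (η + 1) < 1 := Real.rpow_lt_one hq.le hq' (by linarith)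
  have hr1 : r < 1 := by rw [hr]; linarith
  have hrpos : 0 < r := by rw [hr]; linarith
  have hqer : q ^ (η + 1) < r := by rw [hr]; linarith
  refine summable_of_ratio_norm_eventually_le hr1 ?_
  have h0 : Filter.Tendsto (fun k : ℕ => q * q ^ k) Filter.atTop (nhds (q * 0)) :=
    (tendsto_pow_atTop_nhds_zero_of_lt_one hq.le hq').const_mul q
  have hlt : q * 0 < 1 - q ^ (η + 1) / r := by
    rw [mul_zero]
    have : q ^ (η + 1) / r < 1 := (div_lt_one hrpos).2 hqer
    linarith
  filter_upwards [h0.eventually_lt_const hlt] with k hk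
  have hdiv : 0 < q ^ (η + 1) / r := div_pos hqe hrpos
  have hdpos : 0 < 1 - q * q ^ k := by linarith
  have hnum0 : (0:ℝ) < q ^ μ * q ^ k := by
    have := Real.rpow_pos_of_pos hq μ
    positivity
  have hnum1 : q ^ μ * q ^ k ≤ 1 := by
    have h1 : q ^ μ < 1 := Real.rpow_lt_one hq.le hq' hμ
    have h2 : q ^ k ≤ 1 := pow_le_one₀ hq.le hq'.le
    have h3 : (0:ℝ) ≤ q ^ k := by positivity
    nlinarith
  have hratio : (1 - q ^ μ * q ^ k) / (1 - q * q ^ k) * q ^ (η + 1) ≤ r := by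
    rw [div_mul_eq_mul_div, div_le_iff₀ hdpos]
    have h3 : q ^ (η + 1) < (1 - q * q ^ k) * r := by
      have := (div_lt_iff₀ hrpos).mp (by linarith : q ^ (η + 1) / r < 1 - q * q ^ k)
      linarith
    nlinarith
  have hcp := coef_pos (η := η) hq hq' hμ k
  have hcp1 := coef_pos (η := η) hq hq' hμ (k + 1)
  rw [Real.norm_eq_abs, Real.norm_eq_abs, abs_of_pos hcp, abs_of_pos hcp1,
    coef_succ hq k, mul_comm r _]
  exact mul_le_mul_of_nonneg_left hratio hcp.le

lemma summable_abs_term (hq : 0 < q) (hq' : q < 1) (hμ : 0 < μ) (hη : -1 < η)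
    {w : ℝ → ℝ} {M : ℝ} (hM : ∀ k : ℕ, |w (pt q β t k)| ≤ M) :
    Summable (fun k : ℕ => |coef q η μ k * w (pt q β t k)|) := by
  refine Summable.of_nonneg_of_le (fun k => abs_nonneg _) (fun k => ?_)
    ((summable_coef hq hq' hμ hη).mul_right M)
  rw [abs_mul, abs_of_pos (coef_pos hq hq' hμ k)]
  exact mul_le_mul_of_nonneg_left (hM k) (coef_pos hq hq' hμ k).le

lemma summable_abs_EK (hq : 0 < q) (hq' : q < 1) (hβ : 0 < β) (hμ : 0 < μ) (hη : -1 < η)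
    (ht : 0 < t) {w : ℝ → ℝ} (hcw : ContinuousOn w (Set.Ici 0)) :
    Summable (fun k : ℕ => |coef q η μ k * w (pt q β t k)|) := by
  obtain ⟨C, hC⟩ := (isCompact_Icc (a := (0:ℝ)) (b := t)).exists_bound_of_continuousOn
    (hcw.mono Set.Icc_subset_Ici_self)
  exact summable_abs_term hq hq' hμ hη fun k => by
    simpa [Real.norm_eq_abs] using hC _ (pt_mem hq hq' hβ ht.le k)




lemma EK_eq (q η μ β t : ℝ) (w : ℝ → ℝ) :
    EK q η μ β w t
      = β * (1 - q ^ (1 / β)) * (1 - q) ^ (μ - 1) * ∑' k : ℕ, coef q η μ k * w (pt q β t k) :=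
  rfl

/-- purely arithmetic combination step -/
lemma combine (c₁ c₂ S₁ S₂ S₃ S₄ S₅ S₆ S₇ S₈ T₁ T₂ T₃ T₄ T₅ T₆ T₇ T₈ W D : ℝ)
    (hc₁ : 0 ≤ c₁) (hc₂ : 0 ≤ c₂)
    (e : S₁ * T₁ + S₂ * T₂ + S₃ * T₃ + S₄ * T₄ - S₅ * T₅ - S₆ * T₆ - S₇ * T₇ - S₈ * T₈ = W)
    (hW : |W| ≤ S₈ * T₁ * D) :
    |c₁ * S₁ * (c₂ * T₁) + c₁ * S₂ * (c₂ * T₂) + c₁ * S₃ * (c₂ * T₃) + c₁ * S₄ * (c₂ * T₄)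
      - c₁ * S₅ * (c₂ * T₅) - c₁ * S₆ * (c₂ * T₆) - c₁ * S₇ * (c₂ * T₇) - c₁ * S₈ * (c₂ * T₈)|
      ≤ c₁ * S₈ * (c₂ * T₁) * D := by
  have h2 : c₁ * S₁ * (c₂ * T₁) + c₁ * S₂ * (c₂ * T₂) + c₁ * S₃ * (c₂ * T₃) + c₁ * S₄ * (c₂ * T₄)
      - c₁ * S₅ * (c₂ * T₅) - c₁ * S₆ * (c₂ * T₆) - c₁ * S₇ * (c₂ * T₇) - c₁ * S₈ * (c₂ * T₈)
      = c₁ * c₂ * (S₁ * T₁ + S₂ * T₂ + S₃ * T₃ + S₄ * T₄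
          - S₅ * T₅ - S₆ * T₆ - S₇ * T₇ - S₈ * T₈) := by ring
  rw [h2, e, abs_mul, abs_of_nonneg (mul_nonneg hc₁ hc₂)]
  calc c₁ * c₂ * |W| ≤ c₁ * c₂ * (S₈ * T₁ * D) :=
        mul_le_mul_of_nonneg_left hW (mul_nonneg hc₁ hc₂)
    _ = c₁ * S₈ * (c₂ * T₁) * D := by ring

set_option maxHeartbeats 2000000 in
lemma main_bound
    (c₁ c₂ : ℝ) (hc₁ : 0 ≤ c₁) (hc₂ : 0 ≤ c₂)
    (A B X Y : ℕ → ℝ)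
    (f g h u v : ℝ → ℝ)
    (hA : ∀ k, 0 ≤ A k) (hB : ∀ l, 0 ≤ B l)
    (hX : ∀ k, 0 ≤ X k) (hY : ∀ l, 0 ≤ Y l)
    (hu0 : ∀ x : ℝ, 0 ≤ x → 0 ≤ u x) (hv0 : ∀ x : ℝ, 0 ≤ x → 0 ≤ v x)
    (ψ Ψ φ Φ ω Ω : ℝ)
    (hfb : ∀ x : ℝ, 0 ≤ x → ψ ≤ f x ∧ f x ≤ Ψ)
    (hgb : ∀ x : ℝ, 0 ≤ x → φ ≤ g x ∧ g x ≤ Φ)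
    (hhb : ∀ x : ℝ, 0 ≤ x → ω ≤ h x ∧ h x ≤ Ω)
    (hSA : Summable A) (hSB : Summable B)
    (Mu Mv : ℝ) (hMu : ∀ k, |u (X k)| ≤ Mu) (hMv : ∀ l, |v (Y l)| ≤ Mv) :
    |c₁ * (∑' k : ℕ, A k * (u (X k) * f (X k) * g (X k) * h (X k))) * (c₂ * ∑' l : ℕ, B l * v (Y l))
      + c₁ * (∑' k : ℕ, A k * (u (X k) * h (X k)))
          * (c₂ * ∑' l : ℕ, B l * (v (Y l) * f (Y l) * g (Y l)))
      + c₁ * (∑' k : ℕ, A k * (u (X k) * g (X k)))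
          * (c₂ * ∑' l : ℕ, B l * (v (Y l) * f (Y l) * h (Y l)))
      + c₁ * (∑' k : ℕ, A k * (u (X k) * f (X k)))
          * (c₂ * ∑' l : ℕ, B l * (v (Y l) * g (Y l) * h (Y l)))
      - c₁ * (∑' k : ℕ, A k * (u (X k) * g (X k) * h (X k)))
          * (c₂ * ∑' l : ℕ, B l * (v (Y l) * f (Y l)))
      - c₁ * (∑' k : ℕ, A k * (u (X k) * f (X k) * h (X k)))
          * (c₂ * ∑' l : ℕ, B l * (v (Y l) * g (Y l)))
      - c₁ * (∑' k : ℕ, A k * (u (X k) * f (X k) * g (X k)))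
          * (c₂ * ∑' l : ℕ, B l * (v (Y l) * h (Y l)))
      - c₁ * (∑' k : ℕ, A k * u (X k))
          * (c₂ * ∑' l : ℕ, B l * (v (Y l) * f (Y l) * g (Y l) * h (Y l)))|
      ≤ c₁ * (∑' k : ℕ, A k * u (X k)) * (c₂ * ∑' l : ℕ, B l * v (Y l))
          * ((Ψ - ψ) * (Φ - φ) * (Ω - ω)) := by
  -- bound constants
  have hΨψ : 0 ≤ Ψ - ψ := by have h1 := hfb 0 le_rfl; linarith [h1.1, h1.2]
  have hΦφ : 0 ≤ Φ - φ := by have h1 := hgb 0 le_rfl; linarith [h1.1, h1.2]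
  have hΩω : 0 ≤ Ω - ω := by have h1 := hhb 0 le_rfl; linarith [h1.1, h1.2]
  -- |a*b| ≤ A*B helper
  have habs : ∀ {a b A' B' : ℝ}, |a| ≤ A' → |b| ≤ B' → |a * b| ≤ A' * B' := by
    intro a b A' B' h1 h2
    rw [abs_mul]
    exact mul_le_mul h1 h2 (abs_nonneg _) ((abs_nonneg _).trans h1)
  -- uniform bounds for f, g, h
  have hFf : ∀ x : ℝ, 0 ≤ x → |f x| ≤ max |ψ| |Ψ| := by
    intro x hx
    rcases hfb x hx with ⟨h1, h2⟩
    rw [abs_le]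
    constructor
    · calc -(max |ψ| |Ψ|) ≤ -|ψ| := by simp [le_max_left]
        _ ≤ ψ := neg_abs_le ψ
        _ ≤ f x := h1
    · calc f x ≤ Ψ := h2
        _ ≤ |Ψ| := le_abs_self Ψ
        _ ≤ max |ψ| |Ψ| := le_max_right _ _
  have hGg : ∀ x : ℝ, 0 ≤ x → |g x| ≤ max |φ| |Φ| := by
    intro x hx
    rcases hgb x hx with ⟨h1, h2⟩
    rw [abs_le]
    refine ⟨?_, (h2.trans (le_abs_self Φ)).trans (le_max_right _ _)⟩
    calc -(max |φ| |Φ|) ≤ -|φ| := by simp [le_max_left]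
      _ ≤ φ := neg_abs_le φ
      _ ≤ g x := h1
  have hHh : ∀ x : ℝ, 0 ≤ x → |h x| ≤ max |ω| |Ω| := by
    intro x hx
    rcases hhb x hx with ⟨h1, h2⟩
    rw [abs_le]
    refine ⟨?_, (h2.trans (le_abs_self Ω)).trans (le_max_right _ _)⟩
    calc -(max |ω| |Ω|) ≤ -|ω| := by simp [le_max_left]
      _ ≤ ω := neg_abs_le ω
      _ ≤ h x := h1
  set F := max |ψ| |Ψ| with hF
  set G := max |φ| |Φ| with hG
  set H := max |ω| |Ω| with hH
  -- summability helpers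
  have keyA : ∀ (w : ℝ → ℝ) (M : ℝ), (∀ k, |w (X k)| ≤ M) →
      Summable fun k : ℕ => |A k * w (X k)| := by
    intro w M hM
    refine Summable.of_nonneg_of_le (fun k => abs_nonneg _) (fun k => ?_) (hSA.mul_right M)
    rw [abs_mul, abs_of_nonneg (hA k)]
    exact mul_le_mul_of_nonneg_left (hM k) (hA k)
  have keyB : ∀ (w : ℝ → ℝ) (M : ℝ), (∀ l, |w (Y l)| ≤ M) →
      Summable fun l : ℕ => |B l * w (Y l)| := by
    intro w M hM
    refine Summable.of_nonneg_of_le (fun l => abs_nonneg _) (fun l => ?_) (hSB.mul_right M)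
    rw [abs_mul, abs_of_nonneg (hB l)]
    exact mul_le_mul_of_nonneg_left (hM l) (hB l)
  -- the sixteen abs-summable families
  have a_u : Summable fun k : ℕ => |A k * u (X k)| := keyA u Mu hMu
  have a_uf : Summable fun k : ℕ => |A k * (u (X k) * f (X k))| :=
    keyA (fun s => u s * f s) (Mu * F) fun k => habs (hMu k) (hFf _ (hX k))
  have a_ug : Summable fun k : ℕ => |A k * (u (X k) * g (X k))| :=
    keyA (fun s => u s * g s) (Mu * G) fun k => habs (hMu k) (hGg _ (hX k))
  have a_uh : Summable fun k : ℕ => |A k * (u (X k) * h (X k))| :=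
    keyA (fun s => u s * h s) (Mu * H) fun k => habs (hMu k) (hHh _ (hX k))
  have a_ufg : Summable fun k : ℕ => |A k * (u (X k) * f (X k) * g (X k))| :=
    keyA (fun s => u s * f s * g s) (Mu * F * G) fun k =>
      habs (habs (hMu k) (hFf _ (hX k))) (hGg _ (hX k))
  have a_ufh : Summable fun k : ℕ => |A k * (u (X k) * f (X k) * h (X k))| :=
    keyA (fun s => u s * f s * h s) (Mu * F * H) fun k =>
      habs (habs (hMu k) (hFf _ (hX k))) (hHh _ (hX k))
  have a_ugh : Summable fun k : ℕ => |A k * (u (X k) * g (X k) * h (X k))| :=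
    keyA (fun s => u s * g s * h s) (Mu * G * H) fun k =>
      habs (habs (hMu k) (hGg _ (hX k))) (hHh _ (hX k))
  have a_ufgh : Summable fun k : ℕ => |A k * (u (X k) * f (X k) * g (X k) * h (X k))| :=
    keyA (fun s => u s * f s * g s * h s) (Mu * F * G * H) fun k =>
      habs (habs (habs (hMu k) (hFf _ (hX k))) (hGg _ (hX k))) (hHh _ (hX k))
  have b_v : Summable fun l : ℕ => |B l * v (Y l)| := keyB v Mv hMv
  have b_vf : Summable fun l : ℕ => |B l * (v (Y l) * f (Y l))| :=
    keyB (fun s => v s * f s) (Mv * F) fun l => habs (hMv l) (hFf _ (hY l))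
  have b_vg : Summable fun l : ℕ => |B l * (v (Y l) * g (Y l))| :=
    keyB (fun s => v s * g s) (Mv * G) fun l => habs (hMv l) (hGg _ (hY l))
  have b_vh : Summable fun l : ℕ => |B l * (v (Y l) * h (Y l))| :=
    keyB (fun s => v s * h s) (Mv * H) fun l => habs (hMv l) (hHh _ (hY l))
  have b_vfg : Summable fun l : ℕ => |B l * (v (Y l) * f (Y l) * g (Y l))| :=
    keyB (fun s => v s * f s * g s) (Mv * F * G) fun l =>
      habs (habs (hMv l) (hFf _ (hY l))) (hGg _ (hY l))
  have b_vfh : Summable fun l : ℕ => |B l * (v (Y l) * f (Y l) * h (Y l))| :=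
    keyB (fun s => v s * f s * h s) (Mv * F * H) fun l =>
      habs (habs (hMv l) (hFf _ (hY l))) (hHh _ (hY l))
  have b_vgh : Summable fun l : ℕ => |B l * (v (Y l) * g (Y l) * h (Y l))| :=
    keyB (fun s => v s * g s * h s) (Mv * G * H) fun l =>
      habs (habs (hMv l) (hGg _ (hY l))) (hHh _ (hY l))
  have b_vfgh : Summable fun l : ℕ => |B l * (v (Y l) * f (Y l) * g (Y l) * h (Y l))| :=
    keyB (fun s => v s * f s * g s * h s) (Mv * F * G * H) fun l =>
      habs (habs (habs (hMv l) (hFf _ (hY l))) (hGg _ (hY l))) (hHh _ (hY l))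
  -- product summability and tsum products
  have prod_summ : ∀ {w₁ w₂ : ℕ → ℝ}, (Summable fun k => |w₁ k|) → (Summable fun l => |w₂ l|) →
      Summable fun p : ℕ × ℕ => w₁ p.1 * w₂ p.2 := by
    intro w₁ w₂ h1 h2
    exact summable_mul_of_summable_norm (by simpa [Real.norm_eq_abs] using h1)
      (by simpa [Real.norm_eq_abs] using h2)
  have tprod : ∀ {w₁ w₂ : ℕ → ℝ}, (Summable fun k => |w₁ k|) → (Summable fun l => |w₂ l|) →
      (∑' k, w₁ k) * (∑' l, w₂ l) = ∑' p : ℕ × ℕ, w₁ p.1 * w₂ p.2 := by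
    intro w₁ w₂ h1 h2
    exact Summable.tsum_mul_tsum h1.of_abs h2.of_abs (prod_summ h1 h2)
  apply combine _ _ _ _ _ _ _ _ _ _ _ _ _ _ _ _ _ _
    (∑' p : ℕ × ℕ, A p.1 * u (X p.1) * (B p.2 * v (Y p.2)) *
      ((f (X p.1) - f (Y p.2)) * (g (X p.1) - g (Y p.2)) * (h (X p.1) - h (Y p.2))))
    ((Ψ - ψ) * (Φ - φ) * (Ω - ω)) hc₁ hc₂
  · -- the algebraic identity between tsums
    rw [tprod a_ufgh b_v, tprod a_uh b_vfg, tprod a_ug b_vfh, tprod a_uf b_vgh,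
      tprod a_ugh b_vf, tprod a_ufh b_vg, tprod a_ufg b_vh, tprod a_u b_vfgh]
    rw [← Summable.tsum_add (prod_summ a_ufgh b_v) (prod_summ a_uh b_vfg),
      ← Summable.tsum_add ((prod_summ a_ufgh b_v).add (prod_summ a_uh b_vfg)) (prod_summ a_ug b_vfh),
      ← Summable.tsum_add (((prod_summ a_ufgh b_v).add (prod_summ a_uh b_vfg)).add (prod_summ a_ug b_vfh))
        (prod_summ a_uf b_vgh),
      ← Summable.tsum_sub ((((prod_summ a_ufgh b_v).add (prod_summ a_uh b_vfg)).add
          (prod_summ a_ug b_vfh)).add (prod_summ a_uf b_vgh)) (prod_summ a_ugh b_vf),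
      ← Summable.tsum_sub (((((prod_summ a_ufgh b_v).add (prod_summ a_uh b_vfg)).add
          (prod_summ a_ug b_vfh)).add (prod_summ a_uf b_vgh)).sub (prod_summ a_ugh b_vf))
        (prod_summ a_ufh b_vg),
      ← Summable.tsum_sub ((((((prod_summ a_ufgh b_v).add (prod_summ a_uh b_vfg)).add
          (prod_summ a_ug b_vfh)).add (prod_summ a_uf b_vgh)).sub (prod_summ a_ugh b_vf)).sub
          (prod_summ a_ufh b_vg)) (prod_summ a_ufg b_vh),
      ← Summable.tsum_sub (((((((prod_summ a_ufgh b_v).add (prod_summ a_uh b_vfg)).add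
          (prod_summ a_ug b_vfh)).add (prod_summ a_uf b_vgh)).sub (prod_summ a_ugh b_vf)).sub
          (prod_summ a_ufh b_vg)).sub (prod_summ a_ufg b_vh)) (prod_summ a_u b_vfgh)]
    exact tsum_congr fun p => by ring
  · -- the absolute-value bound on W
    have hT : ∀ p : ℕ × ℕ,
        |(f (X p.1) - f (Y p.2)) * (g (X p.1) - g (Y p.2)) * (h (X p.1) - h (Y p.2))|
          ≤ (Ψ - ψ) * (Φ - φ) * (Ω - ω) := by
      intro p
      rcases hfb _ (hX p.1) with ⟨hf1, hf2⟩
      rcases hfb _ (hY p.2) with ⟨hf3, hf4⟩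
      rcases hgb _ (hX p.1) with ⟨hg1, hg2⟩
      rcases hgb _ (hY p.2) with ⟨hg3, hg4⟩
      rcases hhb _ (hX p.1) with ⟨hh1, hh2⟩
      rcases hhb _ (hY p.2) with ⟨hh3, hh4⟩
      have e1 : |f (X p.1) - f (Y p.2)| ≤ Ψ - ψ := abs_le.2 ⟨by linarith, by linarith⟩
      have e2 : |g (X p.1) - g (Y p.2)| ≤ Φ - φ := abs_le.2 ⟨by linarith, by linarith⟩
      have e3 : |h (X p.1) - h (Y p.2)| ≤ Ω - ω := abs_le.2 ⟨by linarith, by linarith⟩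
      exact habs (habs e1 e2) e3
    have hAu : ∀ k, 0 ≤ A k * u (X k) := fun k => mul_nonneg (hA k) (hu0 _ (hX k))
    have hBv : ∀ l, 0 ≤ B l * v (Y l) := fun l => mul_nonneg (hB l) (hv0 _ (hY l))
    have hptwise : ∀ p : ℕ × ℕ,
        |A p.1 * u (X p.1) * (B p.2 * v (Y p.2)) *
          ((f (X p.1) - f (Y p.2)) * (g (X p.1) - g (Y p.2)) * (h (X p.1) - h (Y p.2)))|
          ≤ A p.1 * u (X p.1) * (B p.2 * v (Y p.2)) * ((Ψ - ψ) * (Φ - φ) * (Ω - ω)) := by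
      intro p
      rw [abs_mul, abs_mul, abs_of_nonneg (hAu p.1), abs_of_nonneg (hBv p.2)]
      exact mul_le_mul_of_nonneg_left (hT p) (mul_nonneg (hAu p.1) (hBv p.2))
    have hbound_summ : Summable fun p : ℕ × ℕ =>
        A p.1 * u (X p.1) * (B p.2 * v (Y p.2)) * ((Ψ - ψ) * (Φ - φ) * (Ω - ω)) :=
      (prod_summ a_u b_v).mul_right _
    have habsS : Summable fun p : ℕ × ℕ =>
        |A p.1 * u (X p.1) * (B p.2 * v (Y p.2)) *
          ((f (X p.1) - f (Y p.2)) * (g (X p.1) - g (Y p.2)) * (h (X p.1) - h (Y p.2)))| :=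
      Summable.of_nonneg_of_le (fun p => abs_nonneg _) hptwise hbound_summ
    calc |∑' p : ℕ × ℕ, A p.1 * u (X p.1) * (B p.2 * v (Y p.2)) *
          ((f (X p.1) - f (Y p.2)) * (g (X p.1) - g (Y p.2)) * (h (X p.1) - h (Y p.2)))|
        ≤ ∑' p : ℕ × ℕ, |A p.1 * u (X p.1) * (B p.2 * v (Y p.2)) *
          ((f (X p.1) - f (Y p.2)) * (g (X p.1) - g (Y p.2)) * (h (X p.1) - h (Y p.2)))| := by
          have hn : Summable fun p : ℕ × ℕ =>
              ‖A p.1 * u (X p.1) * (B p.2 * v (Y p.2)) *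
                ((f (X p.1) - f (Y p.2)) * (g (X p.1) - g (Y p.2)) * (h (X p.1) - h (Y p.2)))‖ := by
            exact habsS
          exact norm_tsum_le_tsum_norm hn
      _ ≤ ∑' p : ℕ × ℕ, A p.1 * u (X p.1) * (B p.2 * v (Y p.2)) *
            ((Ψ - ψ) * (Φ - φ) * (Ω - ω)) := Summable.tsum_le_tsum hptwise habsS hbound_summ
      _ = (∑' p : ℕ × ℕ, A p.1 * u (X p.1) * (B p.2 * v (Y p.2))) *
            ((Ψ - ψ) * (Φ - φ) * (Ω - ω)) := tsum_mul_right
      _ = (∑' k : ℕ, A k * u (X k)) * (∑' l : ℕ, B l * v (Y l)) *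
            ((Ψ - ψ) * (Φ - φ) * (Ω - ω)) := by rw [tprod a_u b_v]

end EKAux

theorem thm5
    (q₁ q₂ β δ μ ν η ζ : ℝ)
    (hq₁ : 0 < q₁) (hq₁' : q₁ < 1) (hq₂ : 0 < q₂) (hq₂' : q₂ < 1)
    (hβ : 0 < β) (hδ : 0 < δ) (hμ : 0 < μ) (hν : 0 < ν)
    (hη : -1 < η) (hζ : -1 < ζ)
    (f g h u v : ℝ → ℝ)
    (hcf : ContinuousOn f (Set.Ici 0))
    (hcg : ContinuousOn g (Set.Ici 0))
    (hch : ContinuousOn h (Set.Ici 0))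
    (hcu : ContinuousOn u (Set.Ici 0))
    (hcv : ContinuousOn v (Set.Ici 0))
    (hfg : Synchronous f g) (hfh : Synchronous f h) (hgh : Synchronous g h)
    (hu0 : ∀ x : ℝ, 0 ≤ x → 0 ≤ u x)
    (hv0 : ∀ x : ℝ, 0 ≤ x → 0 ≤ v x)
    (ψ Ψ φ Φ ω Ω : ℝ)
    (hfb : ∀ x : ℝ, 0 ≤ x → ψ ≤ f x ∧ f x ≤ Ψ)
    (hgb : ∀ x : ℝ, 0 ≤ x → φ ≤ g x ∧ g x ≤ Φ)
    (hhb : ∀ x : ℝ, 0 ≤ x → ω ≤ h x ∧ h x ≤ Ω)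
    (t : ℝ) (ht : 0 < t) :
    |EK q₁ η μ β (fun s => u s * f s * g s * h s) t * EK q₂ ζ ν δ v t +
        EK q₁ η μ β (fun s => u s * h s) t * EK q₂ ζ ν δ (fun s => v s * f s * g s) t +
        EK q₁ η μ β (fun s => u s * g s) t * EK q₂ ζ ν δ (fun s => v s * f s * h s) t +
        EK q₁ η μ β (fun s => u s * f s) t * EK q₂ ζ ν δ (fun s => v s * g s * h s) t -
        EK q₁ η μ β (fun s => u s * g s * h s) t * EK q₂ ζ ν δ (fun s => v s * f s) t -
        EK q₁ η μ β (fun s => u s * f s * h s) t * EK q₂ ζ ν δ (fun s => v s * g s) t -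
        EK q₁ η μ β (fun s => u s * f s * g s) t * EK q₂ ζ ν δ (fun s => v s * h s) t -
        EK q₁ η μ β u t * EK q₂ ζ ν δ (fun s => v s * f s * g s * h s) t|
      ≤ EK q₁ η μ β u t * EK q₂ ζ ν δ v t * ((Ψ - ψ) * (Φ - φ) * (Ω - ω)) := by
  have hc₁ : 0 < β * (1 - q₁ ^ ((1:ℝ) / β)) * (1 - q₁) ^ (μ - 1) := by
    have h1 : q₁ ^ ((1:ℝ) / β) < 1 := Real.rpow_lt_one hq₁.le hq₁' (by positivity)
    have h2 : (0:ℝ) < (1 - q₁) ^ (μ - 1) := Real.rpow_pos_of_pos (by linarith) _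
    have h3 : (0:ℝ) < 1 - q₁ ^ ((1:ℝ) / β) := by linarith
    positivity
  have hc₂ : 0 < δ * (1 - q₂ ^ ((1:ℝ) / δ)) * (1 - q₂) ^ (ν - 1) := by
    have h1 : q₂ ^ ((1:ℝ) / δ) < 1 := Real.rpow_lt_one hq₂.le hq₂' (by positivity)
    have h2 : (0:ℝ) < (1 - q₂) ^ (ν - 1) := Real.rpow_pos_of_pos (by linarith) _
    have h3 : (0:ℝ) < 1 - q₂ ^ ((1:ℝ) / δ) := by linarith
    positivity
  obtain ⟨Mu, hMu⟩ := (isCompact_Icc (a := (0:ℝ)) (b := t)).exists_bound_of_continuousOn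
    (hcu.mono Set.Icc_subset_Ici_self)
  obtain ⟨Mv, hMv⟩ := (isCompact_Icc (a := (0:ℝ)) (b := t)).exists_bound_of_continuousOn
    (hcv.mono Set.Icc_subset_Ici_self)
  simp only [EKAux.EK_eq]
  exact EKAux.main_bound _ _ hc₁.le hc₂.le
    (EKAux.coef q₁ η μ) (EKAux.coef q₂ ζ ν) (EKAux.pt q₁ β t) (EKAux.pt q₂ δ t)
    f g h u v
    (fun k => (EKAux.coef_pos hq₁ hq₁' hμ k).le)
    (fun l => (EKAux.coef_pos hq₂ hq₂' hν l).le)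
    (fun k => (EKAux.pt_mem hq₁ hq₁' hβ ht.le k).1)
    (fun l => (EKAux.pt_mem hq₂ hq₂' hδ ht.le l).1)
    hu0 hv0 ψ Ψ φ Φ ω Ω hfb hgb hhb
    (EKAux.summable_coef hq₁ hq₁' hμ hη)
    (EKAux.summable_coef hq₂ hq₂' hν hζ)
    Mu Mv
    (fun k => by simpa [Real.norm_eq_abs] using hMu _ (EKAux.pt_mem hq₁ hq₁' hβ ht.le k))
    (fun l => by simpa [Real.norm_eq_abs] using hMv _ (EKAux.pt_mem hq₂ hq₂' hδ ht.le l))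
end
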